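/- arXiv:1912.09061 — 2 statements merged into one kernel-verified Lean document; each statement's English description precedes it below -/
import Mathlib

section
/- Let (W,S) be a Coxeter system, q = (q_s)_{s∈S} a Hecke multiparameter, and ε = (ε_s)_{s∈S} ∈ {−1,1}^S with ε_s = ε_t whenever s and t are conjugate in W; set q' := (q_s^{ε_s})_{s∈S}. Then there exists an isometric *-algebra isomorphism Φ: C*_{r,q}(W) → C*_{r,q'}(W) with Φ(T_s^{(q)}) = ε_s T_s^{(q')} for every s ∈ S, and Φ is trace preserving: τ_{q'}(Φ(x)) = τ_q(x) for all x ∈ C*_{r,q}(W). -/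
noncomputable section

/-- The Hilbert space `ℓ²(W)`. -/
abbrev Hecke.l2 (W : Type*) : Type _ := lp (fun _ : W => ℂ) 2

/-- The canonical orthonormal basis vector `δ_w` of `ℓ²(W)`. -/
noncomputable def Hecke.dirac {W : Type*} (w : W) : Hecke.l2 W :=
  letI := Classical.decEq W
  lp.single 2 w 1

namespace HeckeAux

open Hecke ENNReal

/-- If `M i i'` is odd then the simple reflections `i` and `i'` are conjugate. -/
lemma odd_conj {B W : Type*} [Group W] {M : CoxeterMatrix B} (cs : CoxeterSystem M W)
    {i i' : B} {k : ℕ} (h : M i i' = 2 * k + 1) :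
    ∃ w : W, w * cs.simple i * w⁻¹ = cs.simple i' := by
  set a := cs.simple i
  set b := cs.simple i'
  have key : (a * b) ^ (2 * k + 1) = 1 := h ▸ cs.simple_mul_simple_pow i i'
  refine ⟨(a * b) ^ k, ?_⟩
  have hinv : ((a * b) ^ k)⁻¹ = (b * a) ^ k := by
    rw [← inv_pow, mul_inv_rev, cs.inv_simple, cs.inv_simple]
  have hsemi : a * (b * a) ^ k = (a * b) ^ k * a :=
    SemiconjBy.pow_right ((mul_assoc a b a).symm) k
  have h2k : (a * b) ^ (2 * k) = b * a := by
    rw [pow_succ] at key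
    rw [eq_inv_of_mul_eq_one_left key, mul_inv_rev, cs.inv_simple, cs.inv_simple]
  calc (a * b) ^ k * a * ((a * b) ^ k)⁻¹
      = (a * b) ^ k * (a * (b * a) ^ k) := by rw [hinv, mul_assoc]
    _ = (a * b) ^ k * ((a * b) ^ k * a) := by rw [hsemi]
    _ = (a * b) ^ (2 * k) * a := by rw [← mul_assoc, ← pow_add, two_mul]
    _ = b * (a * a) := by rw [h2k, mul_assoc]
    _ = b := by rw [cs.simple_mul_simple_self, mul_one]

variable {W : Type*}

lemma mem_l2_mul (c : W → ℂ) (hc : ∀ w, ‖c w‖ = 1) (f : l2 W) :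
    Memℓp (fun w => c w * f w) 2 := by
  apply memℓp_gen
  have hs : Summable fun w => ‖f w‖ ^ (2 : ℝ≥0∞).toReal :=
    (memℓp_gen_iff (by norm_num)).mp (lp.memℓp f)
  refine hs.congr fun w => ?_
  rw [norm_mul, hc w, one_mul]

def mulLin (c : W → ℂ) (hc : ∀ w, ‖c w‖ = 1) : l2 W →ₗ[ℂ] l2 W where
  toFun f := ⟨fun w => c w * f w, mem_l2_mul c hc f⟩
  map_add' f g := by
    apply lp.ext
    funext w
    simp only [lp.coeFn_add, Pi.add_apply]
    show c w * (f + g) w = c w * f w + c w * g w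
    rw [lp.coeFn_add, Pi.add_apply, mul_add]
  map_smul' r f := by
    apply lp.ext
    funext w
    simp only [RingHom.id_apply]
    show c w * (r • f) w = ((r • (⟨fun w => c w * f w, mem_l2_mul c hc f⟩ : l2 W)) : ∀ _ : W, ℂ) w
    rw [lp.coeFn_smul, Pi.smul_apply, Pi.smul_apply]
    show c w * (r • f w) = r • (c w * f w)
    rw [smul_eq_mul, smul_eq_mul]
    ring

@[simp] lemma mulLin_apply (c : W → ℂ) (hc : ∀ w, ‖c w‖ = 1) (f : l2 W) (w : W) :
    (mulLin c hc f : ∀ _ : W, ℂ) w = c w * f w := rfl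

lemma mulLin_norm (c : W → ℂ) (hc : ∀ w, ‖c w‖ = 1) (f : l2 W) :
    ‖mulLin c hc f‖ = ‖f‖ := by
  have h2 : (0:ℝ) < (2 : ℝ≥0∞).toReal := by norm_num
  have e3 : ‖mulLin c hc f‖ ^ (2 : ℝ≥0∞).toReal = ‖f‖ ^ (2 : ℝ≥0∞).toReal := by
    rw [lp.norm_rpow_eq_tsum h2 (mulLin c hc f), lp.norm_rpow_eq_tsum h2 f]
    congr 1
    funext w
    rw [mulLin_apply, norm_mul, hc w, one_mul]
  have h2' : ((2 : ℝ≥0∞).toReal : ℝ) ≠ 0 := by norm_num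
  exact Real.rpow_left_injOn h2' (by simp [norm_nonneg]) (by simp [norm_nonneg]) e3

def Uop (c : W → ℂ) (hc : ∀ w, ‖c w‖ = 1) : l2 W →L[ℂ] l2 W :=
  LinearMap.mkContinuous (mulLin c hc) 1 fun f => by rw [mulLin_norm, one_mul]

@[simp] lemma Uop_apply (c : W → ℂ) (hc : ∀ w, ‖c w‖ = 1) (f : l2 W) (w : W) :
    (Uop c hc f : ∀ _ : W, ℂ) w = c w * f w := rfl

lemma Uop_norm_le (c : W → ℂ) (hc : ∀ w, ‖c w‖ = 1) : ‖Uop c hc‖ ≤ 1 :=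
  LinearMap.mkContinuous_norm_le _ zero_le_one _

lemma Uop_Uop (c : W → ℂ) (hc : ∀ w, ‖c w‖ = 1) (hc2 : ∀ w, c w * c w = 1) :
    (Uop c hc) * (Uop c hc) = 1 := by
  ext f w
  show c w * (c w * f w) = (1 : l2 W →L[ℂ] l2 W) f w
  rw [ContinuousLinearMap.one_apply, ← mul_assoc, hc2 w, one_mul]

lemma Uop_star (c : W → ℂ) (hc : ∀ w, ‖c w‖ = 1)
    (hconj : ∀ w, (starRingEnd ℂ) (c w) = c w) :
    star (Uop c hc) = Uop c hc := by
  rw [ContinuousLinearMap.star_eq_adjoint]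
  symm
  rw [ContinuousLinearMap.eq_adjoint_iff]
  intro f g
  rw [lp.inner_eq_tsum, lp.inner_eq_tsum]
  congr 1
  funext w
  rw [RCLike.inner_apply, RCLike.inner_apply]
  rw [Uop_apply, Uop_apply, map_mul, hconj w]
  ring

lemma Uop_dirac (c : W → ℂ) (hc : ∀ w, ‖c w‖ = 1) (w : W) :
    Uop c hc (dirac w) = c w • dirac w := by
  letI := Classical.decEq W
  apply lp.ext
  funext v
  rw [lp.coeFn_smul, Pi.smul_apply]
  show c v * (dirac w : ∀ _ : W, ℂ) v = c w • (dirac w : ∀ _ : W, ℂ) v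
  unfold Hecke.dirac
  rcases eq_or_ne v w with rfl | hvw
  · rw [lp.single_apply_self]; simp
  · rw [lp.single_apply_ne _ _ _ hvw, mul_zero, smul_zero]

/-- Two continuous linear maps on `ℓ²(W)` agreeing on all diracs are equal. -/
lemma ext_dirac {A B : l2 W →L[ℂ] l2 W} (h : ∀ w, A (dirac w) = B (dirac w)) : A = B := by
  letI := Classical.decEq W
  refine ContinuousLinearMap.ext fun f => ?_
  have hf : HasSum (fun w => lp.single 2 w (f w)) f :=
    lp.hasSum_single (by norm_num) f
  have key : ∀ (C : l2 W →L[ℂ] l2 W), HasSum (fun w => f w • C (dirac w)) (C f) := by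
    intro C
    have hmap := hf.mapL C
    refine hmap.congr_fun fun w => ?_
    have hsingle : lp.single (E := fun _ : W => ℂ) 2 w (f w) = f w • dirac w := by
      unfold Hecke.dirac
      rw [← lp.single_smul]
      norm_num
    rw [hsingle, map_smul]
  exact ((key A).congr_fun fun w => by rw [h w]).unique (key B)

section conj

variable {H : Type*} [NormedAddCommGroup H] [InnerProductSpace ℂ H] [CompleteSpace H]

/-- Conjugation by a self-adjoint involution as a `⋆`-algebra homomorphism on `B(H)`. -/
def conjSAH (U : H →L[ℂ] H) (hUU : U * U = 1) (hUstar : star U = U) :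
    (H →L[ℂ] H) →⋆ₐ[ℂ] (H →L[ℂ] H) where
  toFun x := U * x * U
  map_one' := by show U * 1 * U = 1; rw [mul_one]; exact hUU
  map_mul' x y := by
    symm
    calc (U * x * U) * (U * y * U) = (U * x) * (U * U) * (y * U) := by noncomm_ring
      _ = (U * x) * (y * U) := by rw [hUU, mul_one]
      _ = U * (x * y) * U := by noncomm_ring
  map_zero' := by show U * 0 * U = 0; rw [mul_zero, zero_mul]
  map_add' x y := by show U * (x + y) * U = U * x * U + U * y * U; rw [mul_add, add_mul]
  commutes' r := by
    show U * algebraMap ℂ _ r * U = algebraMap ℂ _ r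
    simp only [Algebra.algebraMap_eq_smul_one]
    rw [mul_smul_comm, smul_mul_assoc, mul_one, hUU]
  map_star' x := by
    show U * star x * U = star (U * x * U)
    rw [star_mul, star_mul, hUstar, mul_assoc]

lemma conjSAH_apply (U : H →L[ℂ] H) (hUU : U * U = 1) (hUstar : star U = U)
    (x : H →L[ℂ] H) : conjSAH U hUU hUstar x = U * x * U := rfl

lemma conj_norm_eq (U : H →L[ℂ] H) (hU : ‖U‖ ≤ 1) (hUU : U * U = 1)
    (x : H →L[ℂ] H) : ‖U * x * U‖ = ‖x‖ := by
  have le1 : ∀ y : H →L[ℂ] H, ‖U * y * U‖ ≤ ‖y‖ := by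
    intro y
    calc ‖U * y * U‖ ≤ ‖U * y‖ * ‖U‖ := norm_mul_le _ _
      _ ≤ ‖U‖ * ‖y‖ * ‖U‖ := by gcongr; exact norm_mul_le _ _
      _ ≤ 1 * ‖y‖ * 1 := by gcongr
      _ = ‖y‖ := by ring
  refine le_antisymm (le1 x) ?_
  have hx : U * (U * x * U) * U = x := by
    calc U * (U * x * U) * U = (U * U) * x * (U * U) := by noncomm_ring
      _ = x := by rw [hUU, one_mul, mul_one]
  calc ‖x‖ = ‖U * (U * x * U) * U‖ := by rw [hx]
    _ ≤ ‖U * x * U‖ := le1 _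

lemma conjSAH_conjSAH (U : H →L[ℂ] H) (hUU : U * U = 1) (hUstar : star U = U)
    (x : H →L[ℂ] H) : conjSAH U hUU hUstar (conjSAH U hUU hUstar x) = x := by
  rw [conjSAH_apply, conjSAH_apply]
  calc U * (U * x * U) * U = (U * U) * x * (U * U) := by noncomm_ring
    _ = x := by rw [hUU, one_mul, mul_one]

end conj

/-- The key computation: conjugating a Hecke generator by the sign unitary. -/
lemma conj_T {B W : Type*} [Group W] {M : CoxeterMatrix B} (cs : CoxeterSystem M W)
    (c : W → ℂ) (hc : ∀ w, ‖c w‖ = 1) (hc2 : ∀ w, c w * c w = 1)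
    (i : B) (e : ℝ) (he : ∀ w : W, c (cs.simple i * w) = (e : ℂ) * c w)
    (p p' : ℝ) (hp : e * p' = p)
    (X X' : l2 W →L[ℂ] l2 W)
    (hX₁ : ∀ w : W, cs.length w < cs.length (cs.simple i * w) →
      X (dirac w) = dirac (cs.simple i * w))
    (hX₂ : ∀ w : W, cs.length (cs.simple i * w) < cs.length w →
      X (dirac w) = dirac (cs.simple i * w) + (p : ℂ) • dirac w)
    (hX'₁ : ∀ w : W, cs.length w < cs.length (cs.simple i * w) →
      X' (dirac w) = dirac (cs.simple i * w))
    (hX'₂ : ∀ w : W, cs.length (cs.simple i * w) < cs.length w →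
      X' (dirac w) = dirac (cs.simple i * w) + (p' : ℂ) • dirac w) :
    Uop c hc * X * Uop c hc = (e : ℂ) • X' := by
  apply ext_dirac
  intro w
  set U := Uop c hc
  have lhs1 : (U * X * U) (dirac w) = (c w) • U (X (dirac w)) := by
    rw [ContinuousLinearMap.mul_apply, ContinuousLinearMap.mul_apply, Uop_dirac,
      map_smul, map_smul]
  have rhs1 : ((e : ℂ) • X') (dirac w) = (e : ℂ) • X' (dirac w) := rfl
  have hscal : c w * c (cs.simple i * w) = (e : ℂ) := by
    rw [he w, mul_comm ((e:ℂ)) (c w), ← mul_assoc, hc2 w, one_mul]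
  rcases lt_or_gt_of_ne (cs.length_simple_mul_ne w i) with hlt | hgt
  · -- descent : ℓ(s w) < ℓ(w)
    rw [lhs1, rhs1, hX₂ w hlt, hX'₂ w hlt, map_add, map_smul, Uop_dirac, Uop_dirac,
      smul_add, smul_smul, smul_smul, smul_add, smul_smul, smul_smul, hscal]
    congr 1
    have : (e : ℂ) * (p' : ℂ) = (p : ℂ) := by
      rw [← Complex.ofReal_mul, hp]
    rw [this]
    rw [mul_comm (c w) ((p : ℂ)), mul_assoc, hc2 w, mul_one]
  · -- ascent : ℓ(w) < ℓ(s w)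
    rw [lhs1, rhs1, hX₁ w hgt, hX'₁ w hgt, Uop_dirac, smul_smul, hscal]

end HeckeAux

set_option maxHeartbeats 2000000 in
open Hecke in
/-- for a sign tuple `ε` constant on conjugacy classes and `q' = (q_s^{ε_s})`,
there is an isometric, trace-preserving `*`-algebra isomorphism
`Φ : C*_{r,q}(W) → C*_{r,q'}(W)` with `Φ(T_s^{(q)}) = ε_s T_s^{(q')}`. -/
theorem hecke_sign_flip_isomorphism {B W : Type*} [Group W] {M : CoxeterMatrix B}
    (cs : CoxeterSystem M W) (q : B → ℝ) (hq : ∀ s, 0 < q s)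
    (hconj : ∀ s t : B, (∃ w : W, w * cs.simple s * w⁻¹ = cs.simple t) → q s = q t)
    (ε : B → ℝ) (hε : ∀ s, ε s = 1 ∨ ε s = -1)
    (hεconj : ∀ s t : B, (∃ w : W, w * cs.simple s * w⁻¹ = cs.simple t) → ε s = ε t)
    (q' : B → ℝ) (hq' : ∀ s, q' s = q s ^ (ε s))
    (T T' : B → (l2 W →L[ℂ] l2 W))
    (hT₁ : ∀ (s : B) (w : W), cs.length w < cs.length (cs.simple s * w) →
      T s (dirac w) = dirac (cs.simple s * w))
    (hT₂ : ∀ (s : B) (w : W), cs.length (cs.simple s * w) < cs.length w →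
      T s (dirac w) = dirac (cs.simple s * w)
        + ((q s ^ (-(1/2) : ℝ) * (q s - 1) : ℝ) : ℂ) • dirac w)
    (hT'₁ : ∀ (s : B) (w : W), cs.length w < cs.length (cs.simple s * w) →
      T' s (dirac w) = dirac (cs.simple s * w))
    (hT'₂ : ∀ (s : B) (w : W), cs.length (cs.simple s * w) < cs.length w →
      T' s (dirac w) = dirac (cs.simple s * w)
        + ((q' s ^ (-(1/2) : ℝ) * (q' s - 1) : ℝ) : ℂ) • dirac w)
    (A A' : StarSubalgebra ℂ (l2 W →L[ℂ] l2 W))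
    (hA : A = (StarAlgebra.adjoin ℂ (Set.range T)).topologicalClosure)
    (hA' : A' = (StarAlgebra.adjoin ℂ (Set.range T')).topologicalClosure) :
    ∃ Φ : A ≃⋆ₐ[ℂ] A',
      (∀ x : A, ‖(Φ x : l2 W →L[ℂ] l2 W)‖ = ‖(x : l2 W →L[ℂ] l2 W)‖) ∧
      (∀ (s : B) (h : T s ∈ A),
        ((Φ ⟨T s, h⟩ : A') : l2 W →L[ℂ] l2 W) = ((ε s : ℝ) : ℂ) • T' s) ∧
      (∀ x : A,
        (inner ℂ (dirac (1 : W)) ((Φ x : l2 W →L[ℂ] l2 W) (dirac (1 : W))) : ℂ)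
          = (inner ℂ (dirac (1 : W)) ((x : l2 W →L[ℂ] l2 W) (dirac (1 : W))) : ℂ)) := by
  classical
  -- the sign character σ : W →* ℝ
  have liftable : M.IsLiftable ε := by
    intro i i'
    rcases Nat.even_or_odd (M i i') with ⟨k, hk⟩ | ⟨k, hk⟩
    · have h2 : (ε i * ε i') ^ 2 = 1 := by
        rcases hε i with h | h <;> rcases hε i' with h' | h' <;> rw [h, h'] <;> norm_num
      have hk2 : M i i' = 2 * k := by omega
      rw [hk2, pow_mul, h2, one_pow]
    · have hee : ε i = ε i' := hεconj i i' (HeckeAux.odd_conj cs (k := k) (by omega))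
      have h1 : ε i * ε i' = 1 := by
        rw [← hee]; rcases hε i with h | h <;> rw [h] <;> norm_num
      rw [h1, one_pow]
  set σ : W →* ℝ := cs.lift ⟨ε, liftable⟩ with hσ
  have σs : ∀ i, σ (cs.simple i) = ε i := fun i => cs.lift_apply_simple liftable i
  have σsq : ∀ w : W, σ w * σ w = 1 := by
    intro w
    obtain ⟨l, rfl⟩ := cs.wordProd_surjective w
    induction l with
    | nil => simp
    | cons i t ih =>
      rw [cs.wordProd_cons, map_mul, σs]
      have h2 : ε i * ε i = 1 := by rcases hε i with h | h <;> rw [h] <;> norm_num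
      calc (ε i * σ (cs.wordProd t)) * (ε i * σ (cs.wordProd t))
          = (ε i * ε i) * (σ (cs.wordProd t) * σ (cs.wordProd t)) := by ring
        _ = 1 := by rw [h2, ih, one_mul]
  -- the multiplier function
  set c : W → ℂ := fun w => ((σ w : ℝ) : ℂ) with hcdef
  have hc : ∀ w, ‖c w‖ = 1 := by
    intro w
    rcases mul_self_eq_one_iff.mp (σsq w) with h | h <;> simp [hcdef, h]
  have hc2 : ∀ w, c w * c w = 1 := by
    intro w
    simp only [hcdef, ← Complex.ofReal_mul, σsq w, Complex.ofReal_one]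
  have hcconj : ∀ w, (starRingEnd ℂ) (c w) = c w := fun w => Complex.conj_ofReal _
  set U : l2 W →L[ℂ] l2 W := HeckeAux.Uop c hc with hUdef
  have hUU : U * U = 1 := HeckeAux.Uop_Uop c hc hc2
  have hUstar : star U = U := HeckeAux.Uop_star c hc hcconj
  have hUnorm : ‖U‖ ≤ 1 := HeckeAux.Uop_norm_le c hc
  set ψ := HeckeAux.conjSAH U hUU hUstar with hψdef
  -- the coefficient identity
  have hpq : ∀ i, ε i * (q' i ^ (-(1/2) : ℝ) * (q' i - 1))
      = q i ^ (-(1/2) : ℝ) * (q i - 1) := by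
    intro i
    rcases hε i with h | h
    · rw [hq' i, h, Real.rpow_one, one_mul]
    · rw [hq' i, h]
      have hr := hq i
      set r := q i
      have e0 : (r ^ (-1 : ℝ)) ^ (-(1/2) : ℝ) = r ^ ((1:ℝ)/2) := by
        rw [← Real.rpow_mul hr.le]
        congr 1
        norm_num
      have e1 : r ^ ((1:ℝ)/2) * r ^ (-1 : ℝ) = r ^ (-(1/2) : ℝ) := by
        rw [← Real.rpow_add hr]
        congr 1
        norm_num
      have e2 : r ^ (-(1/2) : ℝ) * r = r ^ ((1:ℝ)/2) := by
        have h := Real.rpow_add hr (-(1/2)) 1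
        rw [Real.rpow_one] at h
        rw [← h]
        congr 1
        norm_num
      rw [e0]
      linear_combination -e1 - e2
  have hce : ∀ i (w : W), c (cs.simple i * w) = ((ε i : ℝ) : ℂ) * c w := by
    intro i w
    simp only [hcdef, map_mul, σs]
    push_cast
    ring
  have hmainT : ∀ i, U * T i * U = ((ε i : ℝ) : ℂ) • T' i := fun i =>
    HeckeAux.conj_T cs c hc hc2 i (ε i) (hce i)
      (q i ^ (-(1/2) : ℝ) * (q i - 1)) (q' i ^ (-(1/2) : ℝ) * (q' i - 1)) (hpq i)
      (T i) (T' i) (hT₁ i) (hT₂ i) (hT'₁ i) (hT'₂ i)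
  have hee : ∀ i, ε i * ε i = 1 := by
    intro i; rcases hε i with h | h <;> rw [h] <;> norm_num
  have hmainT' : ∀ i, U * T' i * U = ((ε i : ℝ) : ℂ) • T i := by
    intro i
    have hp2 : ε i * (q i ^ (-(1/2) : ℝ) * (q i - 1))
        = q' i ^ (-(1/2) : ℝ) * (q' i - 1) := by
      rw [← hpq i, ← mul_assoc, hee i, one_mul]
    exact HeckeAux.conj_T cs c hc hc2 i (ε i) (hce i)
      (q' i ^ (-(1/2) : ℝ) * (q' i - 1)) (q i ^ (-(1/2) : ℝ) * (q i - 1)) hp2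
      (T' i) (T i) (hT'₁ i) (hT'₂ i) (hT₁ i) (hT₂ i)
  -- membership of generators
  have hTA : ∀ i, T i ∈ A := by
    intro i
    rw [hA]
    exact StarSubalgebra.le_topologicalClosure _ (StarAlgebra.subset_adjoin ℂ _ ⟨i, rfl⟩)
  have hT'A' : ∀ i, T' i ∈ A' := by
    intro i
    rw [hA']
    exact StarSubalgebra.le_topologicalClosure _ (StarAlgebra.subset_adjoin ℂ _ ⟨i, rfl⟩)
  have hsmul : ∀ (S : StarSubalgebra ℂ (l2 W →L[ℂ] l2 W)) (r : ℂ)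
      (x : l2 W →L[ℂ] l2 W), x ∈ S → r • x ∈ S := by
    intro S r x hx
    rw [Algebra.smul_def]
    exact mul_mem (S.algebraMap_mem r) hx
  have hψcont : Continuous ψ := by
    show Continuous fun x => U * x * U
    exact (continuous_mul_left U).mul continuous_const
  have hmem : ∀ x ∈ A, ψ x ∈ A' := by
    intro x hx
    have hle : A ≤ StarSubalgebra.comap ψ A' := by
      rw [hA]
      refine StarSubalgebra.topologicalClosure_minimal ?_ ?_
      · refine StarAlgebra.adjoin_le ?_
        rintro _ ⟨i, rfl⟩
        show ψ (T i) ∈ A'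
        rw [show ψ (T i) = U * T i * U from rfl, hmainT i]
        exact hsmul A' _ _ (hT'A' i)
      · have hcl : IsClosed (A' : Set (l2 W →L[ℂ] l2 W)) := by
          rw [hA']; exact StarSubalgebra.isClosed_topologicalClosure _
        exact hcl.preimage hψcont
    exact hle hx
  have hmem' : ∀ y ∈ A', ψ y ∈ A := by
    intro y hy
    have hle : A' ≤ StarSubalgebra.comap ψ A := by
      rw [hA']
      refine StarSubalgebra.topologicalClosure_minimal ?_ ?_
      · refine StarAlgebra.adjoin_le ?_
        rintro _ ⟨i, rfl⟩
        show ψ (T' i) ∈ A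
        rw [show ψ (T' i) = U * T' i * U from rfl, hmainT' i]
        exact hsmul A _ _ (hTA i)
      · have hcl : IsClosed (A : Set (l2 W →L[ℂ] l2 W)) := by
          rw [hA]; exact StarSubalgebra.isClosed_topologicalClosure _
        exact hcl.preimage hψcont
    exact hle hy
  refine ⟨{ toFun := fun x => ⟨ψ x.1, hmem x.1 x.2⟩,
            invFun := fun y => ⟨ψ y.1, hmem' y.1 y.2⟩,
            left_inv := fun x => Subtype.ext (HeckeAux.conjSAH_conjSAH U hUU hUstar x.1),
            right_inv := fun y => Subtype.ext (HeckeAux.conjSAH_conjSAH U hUU hUstar y.1),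
            map_mul' := fun x y => Subtype.ext (map_mul ψ x.1 y.1),
            map_add' := fun x y => Subtype.ext (map_add ψ x.1 y.1),
            map_smul' := fun r x => Subtype.ext (map_smul ψ r x.1),
            map_star' := fun x => Subtype.ext (map_star ψ x.1) }, ?_, ?_, ?_⟩
  · intro x
    exact HeckeAux.conj_norm_eq U hUnorm hUU x.1
  · intro s h
    exact hmainT s
  · intro x
    have hU1 : U (dirac (1 : W)) = dirac (1 : W) := by
      have h := HeckeAux.Uop_dirac c hc (1 : W)
      have hc1 : c (1 : W) = 1 := by simp [hcdef, map_one]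
      rw [hc1, one_smul] at h
      exact h
    have happ : ψ x.1 (dirac (1 : W)) = U (x.1 (dirac (1 : W))) := by
      show (U * x.1 * U) (dirac (1 : W)) = _
      rw [ContinuousLinearMap.mul_apply, ContinuousLinearMap.mul_apply, hU1]
    show (inner ℂ (dirac (1 : W)) (ψ x.1 (dirac (1 : W))) : ℂ) = _
    rw [happ]
    have hadj : ContinuousLinearMap.adjoint U = U := by
      rw [← ContinuousLinearMap.star_eq_adjoint, hUstar]
    calc (inner ℂ (dirac (1 : W)) (U (x.1 (dirac (1 : W)))) : ℂ)
        = (inner ℂ (dirac (1 : W)) ((ContinuousLinearMap.adjoint U) (x.1 (dirac (1 : W)))) : ℂ) := by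
          rw [hadj]
      _ = (inner ℂ (U (dirac (1 : W))) (x.1 (dirac (1 : W))) : ℂ) :=
          ContinuousLinearMap.adjoint_inner_right _ _ _
      _ = (inner ℂ (dirac (1 : W)) (x.1 (dirac (1 : W))) : ℂ) := by rw [hU1]
end
end

section
/- Let l ≥ 1 be an integer and S₁, …, S_l pairwise disjoint finite sets with union S. Then the multivariate polynomial Q := 1 + (l−1)·∏_{s∈S}(1+X_s) − ∑_{m=1}^l ∏_{s∈S∖S_m}(1+X_s), in the variables (X_s)_{s∈S} over ℤ, satisfies Q(0) = 0 and all coefficients of Q are nonnegative. -/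
/-! Write `Pₘ = ∏_{s ∈ Sₘ} (1 + X_s) = 1 + rₘ`, where `rₘ` has nonnegative coefficients and no
constant term. Expanding both products over subsets `J` of the blocks, `∏ₘ (1 + rₘ)` contributes
`r_J := ∏_{k ∈ J} r_k` once, while `r_J` occurs in `∏_{k ≠ m} (1 + r_k)` for the `l - |J|` indices
`m ∉ J`. Hence `Q = ∑_{J ≠ ∅} (|J| - 1) r_J`, a sum of products of the `rₘ` with nonnegative
integer weights. -/

open MvPolynomial Finset

section

variable {ι R : Type*} [Fintype ι] [DecidableEq ι] [CommRing R]

theorem sum_prod_erase_one_add (r : ι → R) :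
    ∑ m, ∏ k ∈ univ.erase m, (1 + r k) = ∑ J : Finset ι, (Fintype.card ι - #J) • ∏ k ∈ J, r k := by
  have powerset_erase (m : ι) : (univ.erase m).powerset = univ.filter (m ∉ ·) := by
    ext J; simp [subset_erase]
  simp_rw [prod_one_add, powerset_erase, sum_filter]
  rw [sum_comm]
  refine sum_congr rfl fun J _ => ?_
  rw [sum_ite, sum_const_zero, add_zero, sum_const, filter_not, filter_mem_eq_inter, univ_inter,
    card_sdiff_of_subset (subset_univ J), card_univ]

-- The truncated subtraction `#J - 1` makes the term of `J = ∅` vanish.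
theorem one_add_card_sub_one_mul_prod_one_add_sub_sum_prod_erase (r : ι → R) :
    1 + ((Fintype.card ι : R) - 1) * ∏ k, (1 + r k) - ∑ m, ∏ k ∈ univ.erase m, (1 + r k) =
      ∑ J : Finset ι, (#J - 1) • ∏ k ∈ J, r k := by
  rw [sum_prod_erase_one_add, prod_one_add, powerset_univ, mul_sum]
  nth_rw 1 [← Fintype.sum_ite_eq' (∅ : Finset ι) (fun _ => (1 : R))]
  rw [← sum_add_distrib, ← sum_sub_distrib]
  refine sum_congr rfl fun J _ => ?_
  obtain rfl | hJ := J.eq_empty_or_nonempty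
  · simp
  · have hJn : #J ≤ Fintype.card ι := card_le_univ J
    rw [if_neg hJ.ne_empty, nsmul_eq_mul, nsmul_eq_mul, Nat.cast_sub hJn,
      Nat.cast_sub hJ.card_pos]
    ring

end

theorem Subsemiring.prod_one_add_sub_one_mem {ι R : Type*} [CommRing R] (N : Subsemiring R)
    (s : Finset ι) {f : ι → R} (hf : ∀ i ∈ s, f i ∈ N) : ∏ i ∈ s, (1 + f i) - 1 ∈ N := by
  classical
  rw [prod_one_add, ← sum_erase_add _ _ (empty_mem_powerset s), prod_empty, add_sub_cancel_right]
  refine sum_mem fun t ht => prod_mem fun i hi => hf i ?_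
  exact mem_powerset.mp (mem_of_mem_erase ht) hi

theorem prod_filter_ne_eq_prod_erase_prod_fiber {S ι M : Type*} [Fintype S] [Fintype ι]
    [DecidableEq ι] [CommMonoid M] (blk : S → ι) (m : ι) (f : S → M) :
    ∏ s ∈ univ.filter (fun s => blk s ≠ m), f s =
      ∏ k ∈ univ.erase m, ∏ s ∈ univ.filter (fun s => blk s = k), f s := by
  rw [prod_fiberwise_eq_prod_filter]
  simp only [mem_erase, mem_univ, and_true]

namespace MvPolynomial

variable (σ R : Type*) [CommSemiring R] [PartialOrder R] [IsOrderedRing R]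

def nonnegCoeffs : Subsemiring (MvPolynomial σ R) where
  carrier := {p | ∀ d, 0 ≤ p.coeff d}
  mul_mem' hp hq d := by
    classical
    rw [coeff_mul]
    exact sum_nonneg fun x _ => mul_nonneg (hp _) (hq _)
  one_mem' d := by
    classical
    rw [coeff_one]
    split_ifs <;> simp
  add_mem' hp hq d := add_nonneg (hp d) (hq d)
  zero_mem' _ := le_rfl

variable {σ R}

theorem X_mem_nonnegCoeffs (s : σ) : X s ∈ nonnegCoeffs σ R := fun d => by
  classical
  rw [coeff_X]
  split_ifs <;> simp

end MvPolynomial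

theorem growth_polynomial_nonneg_coeffs_general {S : Type*} [Fintype S]
    (l : ℕ) (blk : S → Fin l)
    (Q : MvPolynomial S ℤ)
    (hQ : Q = 1 + MvPolynomial.C ((l : ℤ) - 1) * ∏ s : S, (1 + MvPolynomial.X s)
      - ∑ m : Fin l, ∏ s ∈ Finset.univ.filter (fun s => blk s ≠ m), (1 + MvPolynomial.X s)) :
    MvPolynomial.coeff 0 Q = 0 ∧ ∀ d : S →₀ ℕ, 0 ≤ MvPolynomial.coeff d Q := by
  set r : Fin l → MvPolynomial S ℤ := fun k => ∏ s ∈ univ.filter (fun s => blk s = k), (1 + X s) - 1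
  have hQr : Q = ∑ J : Finset (Fin l), (#J - 1) • ∏ k ∈ J, r k := by
    rw [← one_add_card_sub_one_mul_prod_one_add_sub_sum_prod_erase, hQ, ← prod_fiberwise univ blk]
    simp_rw [prod_filter_ne_eq_prod_erase_prod_fiber blk, r, add_sub_cancel, Fintype.card_fin]
    simp
  have constantCoeff_r (k : Fin l) : constantCoeff (r k) = 0 := by simp [r]
  refine ⟨?_, ?_⟩
  · rw [← constantCoeff_eq, hQr, map_sum]
    refine sum_eq_zero fun J _ => ?_
    obtain rfl | ⟨k, hk⟩ := J.eq_empty_or_nonempty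
    · simp
    · rw [map_nsmul, map_prod, prod_eq_zero hk (constantCoeff_r k), smul_zero]
  · change Q ∈ nonnegCoeffs S ℤ
    rw [hQr]
    refine sum_mem fun J _ => nsmul_mem (prod_mem fun k _ => ?_) _
    exact Subsemiring.prod_one_add_sub_one_mem _ _ fun s _ => X_mem_nonnegCoeffs s

/-- with `S` partitioned into `l` blocks (the blocks being the fibers of
`blk : S → Fin l`), the polynomial
`Q = 1 + (l−1)·∏_{s∈S}(1+X_s) − ∑ₘ ∏_{s∉Sₘ}(1+X_s)` has zero constant coefficient and all of
its coefficients are nonnegative. -/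
theorem growth_polynomial_nonneg_coeffs {S : Type*} [Fintype S] [DecidableEq S]
    (l : ℕ) (hl : 1 ≤ l) (blk : S → Fin l)
    (Q : MvPolynomial S ℤ)
    (hQ : Q = 1 + MvPolynomial.C ((l : ℤ) - 1) * ∏ s : S, (1 + MvPolynomial.X s)
      - ∑ m : Fin l, ∏ s ∈ Finset.univ.filter (fun s => blk s ≠ m), (1 + MvPolynomial.X s)) :
    MvPolynomial.coeff 0 Q = 0 ∧ ∀ d : S →₀ ℕ, 0 ≤ MvPolynomial.coeff d Q :=
  growth_polynomial_nonneg_coeffs_general l blk Q hQ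
end
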